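/- Fix k ≥ 1 and d ∈ ℝ^k with a unique minimizer j* (d_{j*} < d_j for all j ≠ j*). For τ > 0 set z_j(τ) = −d_j/τ, and let p(τ) be any maximizer over the probability simplex Δ^{k−1} of the Tsallis-regularized objective p ↦ Σ_j p_j·z_j(τ) + H_{1.5}(p). Then p(τ) converges to the one-hot vector at j* as τ → 0⁺: p_{j*}(τ) → 1 and p_j(τ) → 0 for j ≠ j*. -/
import Mathlib


open Filter

/-- Tsallis entropy of order 3/2: `H_{1.5}(p) = (4/3)·Σ_j (p_j − p_j^{3/2})`. -/
noncomputable def tsallisEntropy15 {k : ℕ} (p : Fin k → ℝ) : ℝ :=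
  (4 / 3) * ∑ j, (p j - p j ^ ((3 : ℝ) / 2))

/-- Hard-assignment limit of Entmax-1.5: if `d` has a unique
minimizer `j*` and, for each `τ > 0`, `p(τ)` maximizes
`p ↦ Σ_j p_j·(−d_j/τ) + H_{1.5}(p)` over the probability simplex, then `p(τ)`
converges to the one-hot vector at `j*` as `τ → 0⁺`. -/
theorem entmax15_hard_assignment_limit
    (k : ℕ) (hk : 1 ≤ k) (d : Fin k → ℝ) (jstar : Fin k)
    (hmin : ∀ j, j ≠ jstar → d jstar < d j)
    (p : ℝ → Fin k → ℝ)
    (hsimplex : ∀ τ : ℝ, 0 < τ → (∀ j, 0 ≤ p τ j) ∧ ∑ j, p τ j = 1)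
    (hmax : ∀ τ : ℝ, 0 < τ → ∀ q : Fin k → ℝ, (∀ j, 0 ≤ q j) → ∑ j, q j = 1 →
      ∑ j, q j * (-(d j) / τ) + tsallisEntropy15 q
        ≤ ∑ j, p τ j * (-(d j) / τ) + tsallisEntropy15 (p τ)) :
    Tendsto (fun τ => p τ jstar) (nhdsWithin 0 (Set.Ioi 0)) (nhds 1) ∧
    ∀ j, j ≠ jstar →
      Tendsto (fun τ => p τ j) (nhdsWithin 0 (Set.Ioi 0)) (nhds 0) := by
  set C : ℝ := (4 / 3) * k with hCdef
  have hC : (0:ℝ) ≤ C := by positivity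
  -- Key estimate: each coordinate times its gap is at most C·τ.
  have key : ∀ τ : ℝ, 0 < τ → ∀ j, p τ j * (d j - d jstar) ≤ C * τ := by
    intro τ hτ j
    obtain ⟨hpos, hsum⟩ := hsimplex τ hτ
    set q : Fin k → ℝ := fun i => if i = jstar then 1 else 0 with hq
    have hq0 : ∀ i, 0 ≤ q i := by
      intro i; simp only [hq]; split <;> norm_num
    have hq1 : ∑ i, q i = 1 := by simp [hq]
    have hmax' := hmax τ hτ q hq0 hq1
    have hHq : tsallisEntropy15 q = 0 := by
      unfold tsallisEntropy15
      have h0 : ∀ i, q i - q i ^ ((3:ℝ)/2) = 0 := by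
        intro i; simp only [hq]; split
        · simp [Real.one_rpow]
        · rw [Real.zero_rpow (by norm_num)]; ring
      simp [h0]
    have hsumq : ∑ i, q i * (-(d i) / τ) = -(d jstar) / τ := by
      simp [hq, Finset.sum_ite_eq']
    have hHp : tsallisEntropy15 (p τ) ≤ C := by
      unfold tsallisEntropy15
      have hle : ∑ i, (p τ i - p τ i ^ ((3:ℝ)/2)) ≤ ∑ _i : Fin k, (1:ℝ) := by
        apply Finset.sum_le_sum
        intro i _
        have h1 : p τ i ≤ 1 := by
          have := Finset.single_le_sum (fun i _ => hpos i) (Finset.mem_univ i)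
          linarith [hsum ▸ this]
        have h2 : 0 ≤ p τ i ^ ((3:ℝ)/2) := Real.rpow_nonneg (hpos i) _
        linarith
      have hk' : ∑ _i : Fin k, (1:ℝ) = k := by simp
      rw [hCdef]
      nlinarith [hle, hk']
    have hsum2 : ∑ i, p τ i * (-(d i) / τ) = (∑ i, p τ i * (-(d i))) / τ := by
      rw [Finset.sum_div]
      congr 1; ext i; ring
    have hstep : -(d jstar) / τ ≤ (∑ i, p τ i * (-(d i))) / τ + C := by
      rw [hsumq, hHq, hsum2] at hmax'
      linarith
    have hmul : -(d jstar) ≤ (∑ i, p τ i * (-(d i))) + C * τ := by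
      have h2 := mul_le_mul_of_nonneg_right hstep hτ.le
      rw [div_mul_cancel₀ _ hτ.ne', add_mul, div_mul_cancel₀ _ hτ.ne'] at h2
      exact h2
    have hexp : ∑ i, p τ i * (d i - d jstar)
        = (∑ i, p τ i * d i) - (∑ i, p τ i) * d jstar := by
      rw [Finset.sum_mul, ← Finset.sum_sub_distrib]
      congr 1; ext i; ring
    have hneg : ∑ i, p τ i * (-(d i)) = -(∑ i, p τ i * d i) := by
      simp [mul_neg]
    have hsumle : ∑ i, p τ i * (d i - d jstar) ≤ C * τ := by
      rw [hexp, hsum]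
      rw [hneg] at hmul
      linarith
    have hterm : p τ j * (d j - d jstar) ≤ ∑ i, p τ i * (d i - d jstar) := by
      apply Finset.single_le_sum (f := fun i => p τ i * (d i - d jstar))
        (fun i _ => ?_) (Finset.mem_univ j)
      rcases eq_or_ne i jstar with h | h
      · simp [h]
      · exact mul_nonneg (hpos i) (by linarith [hmin i h])
    linarith
  -- Off-coordinates tend to 0.
  have hoff : ∀ j, j ≠ jstar →
      Tendsto (fun τ => p τ j) (nhdsWithin 0 (Set.Ioi 0)) (nhds 0) := by
    intro j hj
    have hδ : 0 < d j - d jstar := by linarith [hmin j hj]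
    have hbound : ∀ᶠ τ in nhdsWithin (0:ℝ) (Set.Ioi 0),
        p τ j ≤ (C / (d j - d jstar)) * τ := by
      filter_upwards [self_mem_nhdsWithin] with τ hτ
      have hτ' : (0:ℝ) < τ := hτ
      have := key τ hτ' j
      rw [div_mul_eq_mul_div, le_div_iff₀ hδ]
      linarith [this]
    have hnn : ∀ᶠ τ in nhdsWithin (0:ℝ) (Set.Ioi 0), 0 ≤ p τ j := by
      filter_upwards [self_mem_nhdsWithin] with τ hτ
      exact (hsimplex τ hτ).1 j
    have hlim : Tendsto (fun τ : ℝ => (C / (d j - d jstar)) * τ)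
        (nhdsWithin 0 (Set.Ioi 0)) (nhds 0) := by
      have : Tendsto (fun τ : ℝ => (C / (d j - d jstar)) * τ) (nhds 0)
          (nhds ((C / (d j - d jstar)) * 0)) :=
        (continuous_const.mul continuous_id).tendsto 0
      simpa using this.mono_left nhdsWithin_le_nhds
    exact squeeze_zero' hnn hbound hlim
  refine ⟨?_, hoff⟩
  have hsum0 : Tendsto (fun τ => ∑ j ∈ Finset.univ.erase jstar, p τ j)
      (nhdsWithin 0 (Set.Ioi 0)) (nhds 0) := by
    have := tendsto_finset_sum (Finset.univ.erase jstar)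
      (fun j hj => hoff j (Finset.ne_of_mem_erase hj))
    simpa using this
  have heq : (fun τ => 1 - ∑ j ∈ Finset.univ.erase jstar, p τ j)
      =ᶠ[nhdsWithin (0:ℝ) (Set.Ioi 0)] (fun τ => p τ jstar) := by
    filter_upwards [self_mem_nhdsWithin] with τ hτ
    obtain ⟨hpos, hsum⟩ := hsimplex τ hτ
    have h := Finset.sum_erase_add Finset.univ (p τ) (Finset.mem_univ jstar)
    linarith [h, hsum]
  have : Tendsto (fun τ => 1 - ∑ j ∈ Finset.univ.erase jstar, p τ j)
      (nhdsWithin 0 (Set.Ioi 0)) (nhds (1 - 0)) := tendsto_const_nhds.sub hsum0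
  simpa using this.congr' heq
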